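/- arXiv:2602.17746 — 3 statements merged into one kernel-verified Lean document; each statement's English description precedes it below -/
import Mathlib

section
/- Let p be a prime and let λ ∈ ℚ_p with λ ≠ 0 and λ ≠ 1. Let E_λ be the Weierstrass curve y² = x(x−1)(x−λ) over ℚ_p. If v_p(λ) ≠ 0, then Δ(E_λ) ≠ 0, j(E_λ) ≠ 0, and v_p(j(E_λ)) = 8·v_p(2) − 2·|v_p(λ)|. (In particular v_p(j(E_λ)) = −2·|v_p(λ)| for p odd, and = 8 − 2·|v_2(λ)| for p = 2.) -/
/-!
With `t = λ(λ - 1)` one has `Δ = 2⁴ t²` and `c₄ = 2⁴ (t + 1)`, so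
`v(j) = 8 v(2) + 3 v(t + 1) - 2 v(t)`. If `v(λ) ≠ 0`, the ultrametric equality gives
`v(λ - 1) = min (v λ) 0`, hence `v(t) = v(λ) + min (v λ) 0` is again nonzero and
`v(t + 1) = min (v t) 0`; both signs of `v(λ)` then yield `v(j) = 8 v(2) - 2 |v(λ)|`.
-/

/-- The Legendre curve `y² = x(x-1)(x-λ)` as a Weierstrass curve. -/
def LegendreCurve {R : Type*} [CommRing R] (lam : R) : WeierstrassCurve R :=
  { a₁ := 0, a₂ := -(lam + 1), a₃ := 0, a₄ := lam, a₆ := 0 }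

namespace Padic

variable {p : ℕ} [Fact p.Prime]

lemma valuation_neg (x : ℚ_[p]) : (-x).valuation = x.valuation := by
  rcases eq_or_ne x 0 with rfl | hx
  · simp
  · have h := addValuation.map_neg x
    rwa [addValuation.apply hx, addValuation.apply (neg_ne_zero.mpr hx), WithTop.coe_inj] at h

lemma ne_zero_of_valuation_ne_zero {x : ℚ_[p]} (hx : x.valuation ≠ 0) : x ≠ 0 := by
  rintro rfl
  exact hx valuation_zero

lemma valuation_add_of_valuation_ne {x y : ℚ_[p]} (hx : x ≠ 0) (hy : y ≠ 0)
    (h : x.valuation ≠ y.valuation) :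
    x + y ≠ 0 ∧ (x + y).valuation = min x.valuation y.valuation := by
  have hxy : addValuation (x + y) = ↑(min x.valuation y.valuation) := by
    rw [AddValuation.map_add_of_distinct_val, addValuation.apply hx, addValuation.apply hy,
      WithTop.coe_min]
    rwa [addValuation.apply hx, addValuation.apply hy, ne_eq, WithTop.coe_inj]
  have hne : x + y ≠ 0 := fun h0 ↦ by
    rw [h0, _root_.AddValuation.map_zero] at hxy
    exact WithTop.top_ne_coe hxy
  exact ⟨hne, by rwa [addValuation.apply hne, WithTop.coe_inj] at hxy⟩

lemma valuation_add_one_of_valuation_ne_zero {x : ℚ_[p]} (hx : x.valuation ≠ 0) :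
    x + 1 ≠ 0 ∧ (x + 1).valuation = min x.valuation 0 := by
  simpa only [valuation_one] using
    valuation_add_of_valuation_ne (ne_zero_of_valuation_ne_zero hx) one_ne_zero
      (by rwa [valuation_one])

lemma valuation_sub_one_of_valuation_ne_zero {x : ℚ_[p]} (hx : x.valuation ≠ 0) :
    x - 1 ≠ 0 ∧ (x - 1).valuation = min x.valuation 0 := by
  have h1 : (-1 : ℚ_[p]).valuation = 0 := by rw [valuation_neg, valuation_one]
  simpa only [h1, ← sub_eq_add_neg] using
    valuation_add_of_valuation_ne (ne_zero_of_valuation_ne_zero hx) (neg_ne_zero.mpr one_ne_zero)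
      (by rwa [h1])

lemma valuation_div {x y : ℚ_[p]} (hx : x ≠ 0) (hy : y ≠ 0) :
    (x / y).valuation = x.valuation - y.valuation := by
  rw [div_eq_mul_inv, valuation_mul hx (inv_ne_zero hy), valuation_inv, sub_eq_add_neg]

end Padic

namespace LegendreCurve

lemma Δ_eq {R : Type*} [CommRing R] (lam : R) :
    (LegendreCurve lam).Δ = 2 ^ 4 * (lam * (lam - 1)) ^ 2 := by
  simp only [LegendreCurve, WeierstrassCurve.Δ, WeierstrassCurve.b₂, WeierstrassCurve.b₄,
    WeierstrassCurve.b₆, WeierstrassCurve.b₈]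
  ring

lemma c₄_eq {R : Type*} [CommRing R] (lam : R) :
    (LegendreCurve lam).c₄ = 2 ^ 4 * (lam * (lam - 1) + 1) := by
  simp only [LegendreCurve, WeierstrassCurve.c₄, WeierstrassCurve.b₂, WeierstrassCurve.b₄]
  ring

lemma c₄_pow_three_div_Δ {F : Type*} [Field F] [NeZero (2 : F)] (lam : F) :
    (LegendreCurve lam).c₄ ^ 3 / (LegendreCurve lam).Δ
      = 2 ^ 8 * (lam * (lam - 1) + 1) ^ 3 / (lam * (lam - 1)) ^ 2 := by
  rw [c₄_eq, Δ_eq]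
  field_simp

lemma Δ_ne_zero {F : Type*} [Field F] [NeZero (2 : F)] {lam : F} (h0 : lam ≠ 0)
    (h1 : lam ≠ 1) : (LegendreCurve lam).Δ ≠ 0 := by
  simp [Δ_eq, h0, sub_ne_zero.mpr h1, two_ne_zero]

end LegendreCurve

theorem stmt0_general (p : ℕ) [Fact p.Prime] (lam : ℚ_[p])
    (hv : lam.valuation ≠ 0) :
    (LegendreCurve lam).Δ ≠ 0 ∧
    (LegendreCurve lam).c₄ ^ 3 / (LegendreCurve lam).Δ ≠ 0 ∧
    ((LegendreCurve lam).c₄ ^ 3 / (LegendreCurve lam).Δ).valuation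
      = 8 * (2 : ℚ_[p]).valuation - 2 * |lam.valuation| := by
  have hl0 : lam ≠ 0 := Padic.ne_zero_of_valuation_ne_zero hv
  obtain ⟨hl1, hvl1⟩ := Padic.valuation_sub_one_of_valuation_ne_zero hv
  set t := lam * (lam - 1) with ht
  have ht0 : t ^ 2 ≠ 0 := pow_ne_zero _ (mul_ne_zero hl0 hl1)
  have hvt : t.valuation = lam.valuation + min lam.valuation 0 := by
    rw [ht, Padic.valuation_mul hl0 hl1, hvl1]
  obtain ⟨ht1, hvt1⟩ := Padic.valuation_add_one_of_valuation_ne_zero (x := t) (by omega)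
  have h2 : (2 : ℚ_[p]) ^ 8 ≠ 0 := pow_ne_zero _ two_ne_zero
  have hnum : (2 : ℚ_[p]) ^ 8 * (t + 1) ^ 3 ≠ 0 := mul_ne_zero h2 (pow_ne_zero _ ht1)
  rw [LegendreCurve.c₄_pow_three_div_Δ]
  refine ⟨LegendreCurve.Δ_ne_zero hl0 (sub_ne_zero.mp hl1), div_ne_zero hnum ht0, ?_⟩
  rw [Padic.valuation_div hnum ht0, Padic.valuation_mul h2 (pow_ne_zero _ ht1),
    Padic.valuation_pow, Padic.valuation_pow, Padic.valuation_pow, hvt1, hvt, abs_eq_max_neg]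
  push_cast
  omega

theorem stmt0 (p : ℕ) [Fact p.Prime] (lam : ℚ_[p]) (h0 : lam ≠ 0) (h1 : lam ≠ 1)
    (hv : lam.valuation ≠ 0) :
    (LegendreCurve lam).Δ ≠ 0 ∧
    (LegendreCurve lam).c₄ ^ 3 / (LegendreCurve lam).Δ ≠ 0 ∧
    ((LegendreCurve lam).c₄ ^ 3 / (LegendreCurve lam).Δ).valuation
      = 8 * (2 : ℚ_[p]).valuation - 2 * |lam.valuation| :=
  stmt0_general p lam hv
end

section
/- Let p and ℓ be primes and let K be a field extension of ℚ_p that is finitely generated as a field extension (there is a finite subset S ⊆ K such that the subfield generated by ℚ_p and S is all of K). Then the set of ℓ-power roots of unity in K, namely { x ∈ K : x^{ℓⁿ} = 1 for some n ∈ ℕ }, is finite. -/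
/-!
An `ℓ`-power root of unity in a finite extension `L/ℚ_p` lies in the integral closure `O` of
`ℤ_p`, and two distinct ones remain distinct modulo `p²O`: if `x ≡ 1` then
`x^ℓ - 1 = (x - 1)(1 + x + ⋯ + x^(ℓ-1))` with the second factor `≡ ℓ ≢ 0`, so induction on the
exponent forces `x = 1`. As `O` is free of rank `[L : ℚ_p]` over `ℤ_p`, the order of such a root
is at most `p^(2[L : ℚ_p])`.

For a finitely generated `K`, pick a transcendence basis and let `M = ℚ_p(u)`, so `K/M` is finite.
An element of `M` integral over `ℚ_p` lies in the integrally closed ring `ℚ_p[u]`, and specialising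
`u ↦ 0` gives its (irreducible) minimal polynomial a root in `ℚ_p`, so it lies in `ℚ_p`. Hence every
root of unity of `K` has degree at most `[K : M]` over `ℚ_p`, the orders are uniformly bounded, and
all the roots lie among the roots of a single polynomial `X^(B!) - 1`.
-/

open Polynomial IntermediateField

section RootsOfUnityModIdeal

variable {O : Type*} [CommRing O] [IsDomain O] {I : Ideal O} {ℓ : ℕ}

theorem eq_one_of_sub_one_mem_of_pow_pow_eq_one (hℓ : (ℓ : O) ∉ I) {x : O} (hx : x - 1 ∈ I)
    {n : ℕ} (h : x ^ ℓ ^ n = 1) : x = 1 := by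
  induction n generalizing x with
  | zero => simpa using h
  | succ n ih =>
    have hgeom := mul_geom_sum x ℓ
    have hx1 : Ideal.Quotient.mk I x = 1 := by
      rw [← map_one (Ideal.Quotient.mk I), Ideal.Quotient.eq]
      exact hx
    have hsum : (∑ i ∈ Finset.range ℓ, x ^ i) - ℓ ∈ I := by
      rw [← Ideal.Quotient.eq, map_sum, map_natCast]
      simp [hx1]
    have hsum0 : ∑ i ∈ Finset.range ℓ, x ^ i ≠ 0 := fun h0 => hℓ (by simpa [h0] using hsum)
    have hpow : x ^ ℓ = 1 :=
      ih (hgeom ▸ I.mul_mem_right _ hx) (by rw [← pow_mul, ← pow_succ']; exact h)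
    rw [hpow, sub_self, mul_eq_zero] at hgeom
    exact sub_eq_zero.mp (hgeom.resolve_right hsum0)

theorem eq_of_sub_mem_of_pow_pow_eq_one (hℓ : (ℓ : O) ∉ I) {n : ℕ} {ζ ξ : O}
    (hζ : ζ ^ ℓ ^ n = 1) (hξ : ξ ^ ℓ ^ n = 1) (hsub : ζ - ξ ∈ I) : ζ = ξ := by
  have hℓ0 : ℓ ^ n ≠ 0 := pow_ne_zero _ fun h0 => hℓ (by simp [h0])
  set u := Units.ofPowEqOne ξ _ hξ hℓ0
  have hu : (u : O) = ξ := rfl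
  suffices ζ * ↑u⁻¹ = 1 by rwa [Units.mul_inv_eq_one, hu] at this
  refine eq_one_of_sub_one_mem_of_pow_pow_eq_one (n := n) hℓ ?_ ?_
  · have : ζ * ↑u⁻¹ - 1 = (ζ - ξ) * ↑u⁻¹ := by rw [sub_mul, ← hu, Units.mul_inv]
    exact this ▸ I.mul_mem_right _ hsub
  · have hun : u ^ ℓ ^ n = 1 := Units.ext (by simp [hu, hξ])
    rw [mul_pow, hζ, one_mul, ← Units.val_pow_eq_pow_val, inv_pow, hun, inv_one, Units.val_one]

theorem orderOf_le_card_of_pow_pow_eq_one {T : Type*} [Finite T] (hℓ : (ℓ : O) ∉ I)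
    (φ : O → T) (hφ : ∀ x y, φ x = φ y → x - y ∈ I) {ζ : O} {n : ℕ} (hζ : ζ ^ ℓ ^ n = 1) :
    orderOf ζ ≤ Nat.card T := by
  have hpow (m : ℕ) : (ζ ^ m) ^ ℓ ^ n = 1 := by
    rw [← pow_mul, mul_comm, pow_mul, hζ, one_pow]
  have hinj : Function.Injective fun m : Fin (orderOf ζ) => φ (ζ ^ (m : ℕ)) := fun m₁ m₂ h =>
    Fin.ext <| pow_injOn_Iio_orderOf m₁.2 m₂.2 <|
      eq_of_sub_mem_of_pow_pow_eq_one hℓ (hpow _) (hpow _) (hφ _ _ h)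
  simpa using Nat.card_le_card_of_injective _ hinj

end RootsOfUnityModIdeal

theorem Module.Basis.exists_eq_smul_of_forall_dvd {R M ι : Type*} [CommRing R] [AddCommGroup M]
    [Module R M] [Finite ι] (b : Module.Basis ι R M) {r : R} {x : M}
    (h : ∀ i, r ∣ b.repr x i) : ∃ y, x = r • y := by
  choose c hc using h
  refine ⟨b.equivFun.symm c, b.equivFun.injective ?_⟩
  ext i
  simp [hc]

theorem dvd_of_algebraMap_dvd_integralClosure {R K L : Type*} [CommRing R] [IsDomain R]
    [IsIntegrallyClosed R] [Field K] [Algebra R K] [IsFractionRing R K] [Field L] [Algebra K L]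
    [Algebra R L] [IsScalarTower R K L] {r a : R}
    (h : algebraMap R (integralClosure R L) r ∣ algebraMap R (integralClosure R L) a) :
    r ∣ a := by
  obtain ⟨c, hc⟩ := h
  have hcL : algebraMap R L a = algebraMap R L r * c := by
    simpa only [Subalgebra.coe_algebraMap, MulMemClass.coe_mul] using congrArg Subtype.val hc
  simp only [IsScalarTower.algebraMap_apply R K L] at hcL
  rcases eq_or_ne r 0 with rfl | hr
  · simpa using hcL
  have hrK : algebraMap R K r ≠ 0 := by simpa using (IsFractionRing.injective R K).ne hr
  have hq : algebraMap K L (algebraMap R K a / algebraMap R K r) = c := by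
    rw [map_div₀, hcL, mul_div_cancel_left₀ _ ((_root_.map_ne_zero _).mpr hrK)]
  obtain ⟨z, hz⟩ := IsIntegrallyClosed.isIntegral_iff.mp <|
    (isIntegral_algebraMap_iff (algebraMap K L).injective).mp (hq ▸ c.2)
  refine ⟨z, IsFractionRing.injective R K ?_⟩
  rw [map_mul, hz, mul_div_cancel₀ _ hrK]

namespace PadicInt

variable {p : ℕ} [Fact p.Prime]

theorem not_sq_dvd_natCast {ℓ : ℕ} (hℓ : ℓ.Prime) : ¬ (p : ℤ_[p]) ^ 2 ∣ ℓ := by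
  intro h
  have : p ^ 2 ∣ ℓ := by
    rw [← ZMod.natCast_eq_zero_iff, ← map_natCast (toZModPow 2), ← RingHom.mem_ker,
      ker_toZModPow, Ideal.mem_span_singleton]
    exact h
  rcases hℓ.eq_one_or_self_of_dvd _ this with h1 | h1
  · exact (Nat.one_lt_pow two_ne_zero (Fact.out : p.Prime).one_lt).ne' h1
  · exact Nat.Prime.not_prime_pow le_rfl (h1 ▸ hℓ)

theorem sub_mem_span_pow_of_toZModPow_repr_eq {O ι : Type*} [CommRing O] [Algebra ℤ_[p] O]
    [Finite ι] (b : Module.Basis ι ℤ_[p] O) (k : ℕ) {x y : O}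
    (h : ∀ i, toZModPow k (b.repr x i) = toZModPow k (b.repr y i)) :
    x - y ∈ Ideal.span {(p : O) ^ k} := by
  obtain ⟨z, hz⟩ := b.exists_eq_smul_of_forall_dvd (r := (p : ℤ_[p]) ^ k) (x := x - y) fun i => by
    rw [← Ideal.mem_span_singleton, ← ker_toZModPow, RingHom.mem_ker, map_sub,
      Finsupp.sub_apply, map_sub, h i, sub_self]
  rw [hz, Algebra.smul_def, map_pow, map_natCast]
  exact Ideal.mul_mem_right _ _ (Ideal.mem_span_singleton_self _)

end PadicInt

theorem Padic.orderOf_le_of_pow_pow_eq_one {p ℓ : ℕ} [Fact p.Prime] (hℓ : ℓ.Prime) {L : Type*}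
    [Field L] [Algebra ℚ_[p] L] [FiniteDimensional ℚ_[p] L] {ζ : L} {n : ℕ}
    (hζ : ζ ^ ℓ ^ n = 1) : orderOf ζ ≤ p ^ (2 * Module.finrank ℚ_[p] L) := by
  let _ : Algebra ℤ_[p] L := ((algebraMap ℚ_[p] L).comp (algebraMap ℤ_[p] ℚ_[p])).toAlgebra
  have : IsScalarTower ℤ_[p] ℚ_[p] L := IsScalarTower.of_algebraMap_eq fun _ => rfl
  have : Module.IsTorsionFree ℤ_[p] L := Module.isTorsionFree_iff_algebraMap_injective.mpr <|
    (algebraMap ℚ_[p] L).injective.comp (IsFractionRing.injective ℤ_[p] ℚ_[p])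
  set O := integralClosure ℤ_[p] L
  have : Module.Free ℤ_[p] O := IsIntegralClosure.module_free ℤ_[p] ℚ_[p] L O
  have : Module.Finite ℤ_[p] O := IsIntegralClosure.finite ℤ_[p] ℚ_[p] L O
  have hrank : Module.finrank ℤ_[p] O = Module.finrank ℚ_[p] L :=
    IsIntegralClosure.rank ℤ_[p] ℚ_[p] L O
  let b := Module.finBasis ℤ_[p] O
  -- Modulo `p` would not do: `-1 ≡ 1 [2]` for `p = ℓ = 2`.
  have hℓI : (ℓ : O) ∉ Ideal.span {(p : O) ^ 2} := fun h =>
    PadicInt.not_sq_dvd_natCast hℓ <| dvd_of_algebraMap_dvd_integralClosure (K := ℚ_[p]) <| by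
      simpa [Ideal.mem_span_singleton] using h
  let ζO : O := ⟨ζ, .of_pow (pow_pos hℓ.pos n) (hζ ▸ isIntegral_one)⟩
  calc orderOf ζ = orderOf ζO := orderOf_submonoid (H := O.toSubmonoid) ζO
    _ ≤ Nat.card (Fin (Module.finrank ℤ_[p] O) → ZMod (p ^ 2)) :=
      orderOf_le_card_of_pow_pow_eq_one hℓI (fun x i => PadicInt.toZModPow 2 (b.repr x i))
        (fun _ _ h => PadicInt.sub_mem_span_pow_of_toZModPow_repr_eq b 2 (congrFun h))
        (Subtype.ext hζ : ζO ^ ℓ ^ n = 1)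
    _ = p ^ (2 * Module.finrank ℚ_[p] L) := by simp [hrank, pow_mul]

theorem minpoly.natDegree_eq_one_of_algHom {F A : Type*} [Field F] [CommRing A] [IsDomain A]
    [Algebra F A] {a : A} (ha : IsIntegral F a) (ψ : A →ₐ[F] F) :
    (minpoly F a).natDegree = 1 := by
  refine natDegree_eq_of_degree_eq_some (degree_eq_one_of_irreducible_of_root
    (minpoly.irreducible ha) (x := ψ a) ?_)
  rw [IsRoot, ← coe_aeval_eq_eval, aeval_algHom_apply, minpoly.aeval, map_zero]

theorem AlgebraicIndependent.integralClosure_adjoin_eq_bot {F E ι : Type*} [Field F] [Field E]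
    [Algebra F E] {x : ι → E} (hx : AlgebraicIndependent F x) :
    integralClosure F (adjoin F (Set.range x)) = ⊥ := by
  refine eq_bot_iff.mpr fun y hy => ?_
  let i : MvPolynomial ι F →ₐ[F] adjoin F (Set.range x) :=
    hx.aevalEquivField.toAlgHom.comp (IsScalarTower.toAlgHom F _ _)
  have hi : Function.Injective i :=
    hx.aevalEquivField.injective.comp (IsFractionRing.injective _ _)
  have hy' : IsIntegral (MvPolynomial ι F) (hx.aevalEquivField.symm y) :=
    (hy.map hx.aevalEquivField.symm.toAlgHom).tower_top
  obtain ⟨a, ha⟩ := IsIntegrallyClosed.isIntegral_iff.mp hy'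
  have hya : i a = y := by simp [i, ha]
  refine Algebra.mem_bot.mpr (minpoly.natDegree_eq_one_iff.mp ?_)
  rw [← hya, minpoly.algHom_eq i hi]
  exact minpoly.natDegree_eq_one_of_algHom ((isIntegral_algHom_iff i hi).mp (hya ▸ hy))
    (MvPolynomial.aeval fun _ => 0)

theorem minpoly.natDegree_le_of_integralClosure_eq_bot {F M K : Type*} [Field F] [Field M]
    [Field K] [Algebra F M] [Algebra M K] [Algebra F K] [IsScalarTower F M K]
    (hM : integralClosure F M = ⊥) {ζ : K} (hζ : IsIntegral F ζ) :
    (minpoly F ζ).natDegree ≤ (minpoly M ζ).natDegree := by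
  have hlifts := integralClosure.mem_lifts_of_monic_of_dvd_map M (minpoly.monic hζ)
    (minpoly.monic hζ.tower_top) (minpoly.dvd_map_of_isScalarTower F M ζ)
  obtain ⟨q, hq⟩ : ∃ q : F[X], q.map (algebraMap F M) = minpoly M ζ := by
    refine (mem_lifts _).mp <| (lifts_iff_coeff_lifts _).mpr fun i => ?_
    obtain ⟨y, hy⟩ := (lifts_iff_coeff_lifts _).mp hlifts i
    rw [← hy, ← Algebra.mem_bot, ← hM]
    exact y.2
  have hq0 : q ≠ 0 := by
    rintro rfl
    exact minpoly.ne_zero hζ.tower_top (by simpa using hq.symm)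
  have hqζ : Polynomial.aeval ζ q = 0 := by
    rw [← aeval_map_algebraMap M, hq, minpoly.aeval]
  rw [← hq, natDegree_map]
  exact natDegree_le_natDegree (minpoly.degree_le_of_ne_zero F ζ hq0 hqζ)

theorem Padic.orderOf_le_of_pow_pow_eq_one_of_integralClosure_eq_bot {p ℓ : ℕ} [Fact p.Prime]
    (hℓ : ℓ.Prime) {M K : Type*} [Field M] [Field K] [Algebra ℚ_[p] M] [Algebra M K]
    [Algebra ℚ_[p] K] [IsScalarTower ℚ_[p] M K] [FiniteDimensional M K]
    (hM : integralClosure ℚ_[p] M = ⊥) {ζ : K} {n : ℕ} (hζ : ζ ^ ℓ ^ n = 1) :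
    orderOf ζ ≤ p ^ (2 * Module.finrank M K) := by
  have hint : IsIntegral ℚ_[p] ζ := .of_pow (pow_pos hℓ.pos n) (hζ ▸ isIntegral_one)
  have : FiniteDimensional ℚ_[p] ℚ_[p]⟮ζ⟯ := adjoin.finiteDimensional hint
  have hdeg : Module.finrank ℚ_[p] ℚ_[p]⟮ζ⟯ ≤ Module.finrank M K := by
    rw [adjoin.finrank hint]
    exact (minpoly.natDegree_le_of_integralClosure_eq_bot hM hint).trans (minpoly.natDegree_le ζ)
  calc orderOf ζ = orderOf (AdjoinSimple.gen ℚ_[p] ζ) :=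
      orderOf_submonoid (H := ℚ_[p]⟮ζ⟯.toSubalgebra.toSubmonoid) (AdjoinSimple.gen ℚ_[p] ζ)
    _ ≤ p ^ (2 * Module.finrank ℚ_[p] ℚ_[p]⟮ζ⟯) :=
      Padic.orderOf_le_of_pow_pow_eq_one hℓ (Subtype.ext hζ)
    _ ≤ p ^ (2 * Module.finrank M K) :=
      Nat.pow_le_pow_right (Fact.out : p.Prime).pos (by omega)

theorem finite_setOf_orderOf_le {K : Type*} [CommRing K] [IsDomain K] (B : ℕ) :
    {x : K | 0 < orderOf x ∧ orderOf x ≤ B}.Finite := by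
  refine (nthRoots B.factorial (1 : K)).finite_toSet.subset fun x ⟨h0, hB⟩ => ?_
  simpa [mem_nthRoots B.factorial_pos] using
    orderOf_dvd_iff_pow_eq_one.mp (Nat.dvd_factorial h0 hB)

theorem stmt8 (p ℓ : ℕ) [Fact p.Prime] (hℓ : ℓ.Prime)
    (K : Type*) [Field K] [Algebra ℚ_[p] K]
    (hfg : ∃ S : Finset K, IntermediateField.adjoin ℚ_[p] (S : Set K) = ⊤) :
    {x : K | ∃ n : ℕ, x ^ ℓ ^ n = 1}.Finite := by
  have : Algebra.EssFiniteType ℚ_[p] K := fg_top_iff.mp hfg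
  obtain ⟨u, hu⟩ := exists_isTranscendenceBasis ℚ_[p] K
  set M := adjoin ℚ_[p] (Set.range ((↑) : u → K))
  have : Algebra.IsAlgebraic M K := hu.isAlgebraic_field
  have : Algebra.EssFiniteType M K := .of_comp ℚ_[p] M K
  have : Module.Finite M K := Algebra.finite_of_essFiniteType_of_isAlgebraic
  refine (finite_setOf_orderOf_le (p ^ (2 * Module.finrank M K))).subset ?_
  rintro ζ ⟨n, hn⟩
  exact ⟨orderOf_pos_iff.mpr (isOfFinOrder_iff_pow_eq_one.mpr ⟨_, pow_pos hℓ.pos n, hn⟩),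
    Padic.orderOf_le_of_pow_pow_eq_one_of_integralClosure_eq_bot hℓ
      hu.1.integralClosure_adjoin_eq_bot hn⟩
end

section
/- Let G be a profinite group (a compact, Hausdorff, totally disconnected topological group) that is topologically finitely generated: there is a finite subset whose generated subgroup is dense in G. For m ≥ 1, let N_m denote the intersection of all open normal subgroups of G of index at most m. Then: (1) each N_m is an open normal subgroup of G; (2) N_m is stable under every topological group automorphism of G; and (3) the family (N_m)_{m ≥ 1} is cofinal among open subgroups: for every open subgroup U of G there exists m with N_m ≤ U. -/
/-!
If `S` is a finite set topologically generating `G`, an open normal subgroup `N` of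
index at most `m` is the kernel of a homomorphism `G → Perm (Fin m)` (the regular action of `G`
on `G ⧸ N`), and such a homomorphism with open kernel is determined by its values on `S`. So
there are only finitely many such `N`, and their intersection `N_m` is open. It is normal as an
intersection of normal subgroups, and characteristic because continuous automorphisms permute the
open normal subgroups of a given index. Every open `U` has finite index by compactness, so its
normal core is open of some index `m` and `N_m ≤ core U ≤ U`.
-/

/-- The intersection of all open normal subgroups of index at most `m` of a topological
group `G`. -/
def boundedIndexIntersection (G : Type*) [Group G] [TopologicalSpace G] (m : ℕ) :
    Subgroup G :=
  ⨅ N ∈ {N : Subgroup G | N.Normal ∧ IsOpen (N : Set G) ∧ N.index ≤ m}, N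

theorem Subgroup.exists_monoidHom_perm_fin_ker_eq {G : Type*} [Group G] (N : Subgroup G)
    [N.Normal] [N.FiniteIndex] {m : ℕ} (hm : N.index ≤ m) :
    ∃ ψ : G →* Equiv.Perm (Fin m), ψ.ker = N := by
  have : Finite (G ⧸ N) := N.finite_quotient_of_finiteIndex
  have hcard : Nat.card (G ⧸ N) ≤ m := N.index_eq_card ▸ hm
  let e : G ⧸ N ↪ Fin m :=
    (Finite.equivFin (G ⧸ N)).toEmbedding.trans (Fin.castLEEmb hcard)
  refine ⟨(Equiv.Perm.viaEmbeddingHom e).comp (MulAction.toPermHom G (G ⧸ N)), ?_⟩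
  rw [MonoidHom.ker_comp_of_injective _ _ (Equiv.Perm.viaEmbeddingHom_injective e),
    ← Subgroup.normalCore_eq_ker, N.normalCore_eq_self]

section Topological

variable {G : Type*} [Group G] [TopologicalSpace G] [IsTopologicalGroup G]

theorem Subgroup.eq_top_of_isOpen_of_subset {E : Subgroup G} (hE : IsOpen (E : Set G))
    {S : Set G} (hS : Dense (Subgroup.closure S : Set G)) (hSE : S ⊆ E) : E = ⊤ := by
  have hclosure : Subgroup.closure S ≤ E := (Subgroup.closure_le E).mpr hSE
  rw [eq_top_iff, ← SetLike.coe_subset_coe, Subgroup.coe_top, ← hS.closure_eq]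
  exact (E.isClosed_of_isOpen hE).closure_subset_iff.mpr hclosure

theorem MonoidHom.eq_of_eqOn_of_isOpen_ker {M : Type*} [Group M] {f g : G →* M}
    (hf : IsOpen (f.ker : Set G)) (hg : IsOpen (g.ker : Set G)) {S : Set G}
    (hS : Dense (Subgroup.closure S : Set G)) (h : S.EqOn f g) : f = g := by
  have hker : f.ker ⊓ g.ker ≤ f.eqLocus g := fun x hx => by
    rw [Subgroup.mem_inf, MonoidHom.mem_ker, MonoidHom.mem_ker] at hx
    exact hx.1.trans hx.2.symm
  have hopen : IsOpen (f.eqLocus g : Set G) := Subgroup.isOpen_mono hker (hf.inter hg)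
  have htop := Subgroup.eq_top_of_isOpen_of_subset hopen hS h
  exact MonoidHom.ext fun x => (htop ▸ Subgroup.mem_top x : x ∈ f.eqLocus g)

theorem finite_setOf_normal_isOpen_index_le [CompactSpace G] {S : Set G} (hS : S.Finite)
    (hdense : Dense (Subgroup.closure S : Set G)) (m : ℕ) :
    {N : Subgroup G | N.Normal ∧ IsOpen (N : Set G) ∧ N.index ≤ m}.Finite := by
  set 𝒩 := {N : Subgroup G | N.Normal ∧ IsOpen (N : Set G) ∧ N.index ≤ m}
  have hker : ∀ N ∈ 𝒩, ∃ ψ : G →* Equiv.Perm (Fin m), ψ.ker = N := by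
    rintro N ⟨hnormal, hopen, hindex⟩
    have : Finite (G ⧸ N) := N.quotient_finite_of_isOpen hopen
    have : N.FiniteIndex := N.finiteIndex_of_finite_quotient
    exact N.exists_monoidHom_perm_fin_ker_eq hindex
  choose ψ hψ using hker
  have hopen (N : 𝒩) : IsOpen ((ψ N.1 N.2).ker : Set G) := by rw [hψ]; exact N.2.2.1
  have : Finite S := hS
  rw [← Set.finite_coe_iff]
  refine Finite.of_injective (fun N => fun s : S => ψ N.1 N.2 s) fun N₁ N₂ h => ?_
  have heq := MonoidHom.eq_of_eqOn_of_isOpen_ker (hopen N₁) (hopen N₂) hdense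
    fun s hs => congrFun h ⟨s, hs⟩
  exact Subtype.ext (by rw [← hψ N₁.1 N₁.2, ← hψ N₂.1 N₂.2, heq])

end Topological

namespace boundedIndexIntersection

variable {G : Type*} [Group G] [TopologicalSpace G]

theorem mem_iff {m : ℕ} {x : G} : x ∈ boundedIndexIntersection G m ↔
    ∀ N : Subgroup G, N.Normal → IsOpen (N : Set G) → N.index ≤ m → x ∈ N := by
  simp only [boundedIndexIntersection, Subgroup.mem_iInf, Set.mem_ofPred_eq, and_imp]

theorem le_of_index_le {m : ℕ} (N : Subgroup G) [N.Normal] (hN : IsOpen (N : Set G))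
    (hm : N.index ≤ m) : boundedIndexIntersection G m ≤ N :=
  fun _ hx => mem_iff.mp hx N inferInstance hN hm

instance normal (m : ℕ) : (boundedIndexIntersection G m).Normal where
  conj_mem x hx g := mem_iff.mpr fun N hN hopen hm => hN.conj_mem x (mem_iff.mp hx N hN hopen hm) g

theorem le_comap {H : Type*} [Group H] [TopologicalSpace H] {f : G →* H} (hf : Continuous f)
    (hsurj : Function.Surjective f) (m : ℕ) :
    boundedIndexIntersection G m ≤ (boundedIndexIntersection H m).comap f :=
  fun _ hx => mem_iff.mpr fun N hN hopen hm => mem_iff.mp hx (N.comap f) (hN.comap f)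
    (hopen.preimage hf) ((N.index_comap_of_surjective hsurj).symm ▸ hm)

theorem map_mulEquiv {φ : G ≃* G} (hφ : Continuous φ) (hφ_symm : Continuous φ.symm) (m : ℕ) :
    (boundedIndexIntersection G m).map (φ : G →* G) = boundedIndexIntersection G m := by
  refine le_antisymm (Subgroup.map_le_iff_le_comap.mpr (le_comap hφ φ.surjective m)) ?_
  rw [Subgroup.map_equiv_eq_comap_symm]
  exact le_comap hφ_symm φ.symm.surjective m

variable [IsTopologicalGroup G] [CompactSpace G]

theorem isOpen {S : Set G} (hS : S.Finite) (hdense : Dense (Subgroup.closure S : Set G))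
    (m : ℕ) : IsOpen (boundedIndexIntersection G m : Set G) := by
  simp only [boundedIndexIntersection, Subgroup.coe_iInf]
  exact (finite_setOf_normal_isOpen_index_le hS hdense m).isOpen_biInter fun N hN => hN.2.1

theorem exists_le_of_isOpen {U : Subgroup G} (hU : IsOpen (U : Set G)) :
    ∃ m, 1 ≤ m ∧ boundedIndexIntersection G m ≤ U := by
  have : Finite (G ⧸ U) := U.quotient_finite_of_isOpen hU
  have : U.FiniteIndex := U.finiteIndex_of_finite_quotient
  have hcore : IsOpen (U.normalCore : Set G) :=
    U.normalCore.isOpen_of_isClosed_of_finiteIndex (U.normalCore_isClosed (U.isClosed_of_isOpen hU))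
  exact ⟨U.normalCore.index, Nat.one_le_iff_ne_zero.mpr Subgroup.FiniteIndex.index_ne_zero,
    (le_of_index_le U.normalCore hcore le_rfl).trans U.normalCore_le⟩

end boundedIndexIntersection

theorem stmt10_general (G : Type*) [Group G] [TopologicalSpace G] [IsTopologicalGroup G]
    [CompactSpace G]
    (hfg : ∃ S : Finset G, Dense ((Subgroup.closure (S : Set G) : Subgroup G) : Set G)) :
    (∀ m : ℕ, 1 ≤ m →
      IsOpen ((boundedIndexIntersection G m : Subgroup G) : Set G) ∧
      (boundedIndexIntersection G m).Normal) ∧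
    (∀ m : ℕ, 1 ≤ m → ∀ φ : G ≃* G, Continuous φ → Continuous φ.symm →
      Subgroup.map (φ : G →* G) (boundedIndexIntersection G m) = boundedIndexIntersection G m) ∧
    (∀ U : Subgroup G, IsOpen (U : Set G) → ∃ m : ℕ, 1 ≤ m ∧ boundedIndexIntersection G m ≤ U) := by
  obtain ⟨S, hS⟩ := hfg
  exact ⟨fun m _ => ⟨boundedIndexIntersection.isOpen S.finite_toSet hS m, inferInstance⟩,
    fun m _ φ hφ hφ_symm => boundedIndexIntersection.map_mulEquiv hφ hφ_symm m,
    fun _ hU => boundedIndexIntersection.exists_le_of_isOpen hU⟩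

theorem stmt10 (G : Type*) [Group G] [TopologicalSpace G] [IsTopologicalGroup G]
    [CompactSpace G] [T2Space G] [TotallyDisconnectedSpace G]
    (hfg : ∃ S : Finset G, Dense ((Subgroup.closure (S : Set G) : Subgroup G) : Set G)) :
    (∀ m : ℕ, 1 ≤ m →
      IsOpen ((boundedIndexIntersection G m : Subgroup G) : Set G) ∧
      (boundedIndexIntersection G m).Normal) ∧
    (∀ m : ℕ, 1 ≤ m → ∀ φ : G ≃* G, Continuous φ → Continuous φ.symm →
      Subgroup.map (φ : G →* G) (boundedIndexIntersection G m) = boundedIndexIntersection G m) ∧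
    (∀ U : Subgroup G, IsOpen (U : Set G) → ∃ m : ℕ, 1 ≤ m ∧ boundedIndexIntersection G m ≤ U) :=
  stmt10_general G hfg
end
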